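/- arXiv:2603.23038 — 6 statements merged into one kernel-verified Lean document; each statement's English description precedes it below -/
import Mathlib

section
/- If a choice correspondence C on the subsets of a finite set X satisfies Path Independence (C(A ∪ B) = C(C(A) ∪ C(B)) for all A, B ⊆ X), then C satisfies Substitutability: for all A ⊆ B ⊆ X, C(B) ∩ A ⊆ C(A). -/
/-- Path Independence: C(A ∪ B) = C(C(A) ∪ C(B)). -/
def PathIndependent {α : Type*} (C : Set α → Set α) : Prop :=
  ∀ A B : Set α, C (A ∪ B) = C (C A ∪ C B)

/-- If a choice correspondence on a finite set satisfies PI, it satisfies Substitutability. -/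
theorem pi_implies_sub {X : Type*} [Fintype X] (C : Set X → Set X)
    (hC : ∀ A, C A ⊆ A) (hPI : PathIndependent C) :
    ∀ A B : Set X, A ⊆ B → C B ∩ A ⊆ C A := by
  intro A B hAB x hx
  obtain ⟨hxB, hxA⟩ := hx
  have hB : A ∪ (B \ A) = B := Set.union_diff_cancel hAB
  have h1 := hPI A (B \ A)
  rw [hB] at h1
  have h2 : x ∈ C A ∪ C (B \ A) := hC _ (h1 ▸ hxB)
  rcases h2 with h | h
  · exact h
  · exact absurd (hC _ h).2 (not_not_intro hxA)
end

section
/- If a choice correspondence C on the subsets of a finite set X satisfies Path Independence, then C satisfies Consistency: for all A, B ⊆ X, if C(B) ⊆ A ⊆ B then C(A) = C(B). -/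
/-- If a choice correspondence on a finite set satisfies PI, it satisfies Consistency:
if C(B) ⊆ A ⊆ B then C(A) = C(B). -/
theorem pi_implies_con {X : Type*} [Fintype X] (C : Set X → Set X)
    (hC : ∀ A, C A ⊆ A) (hPI : PathIndependent C) :
    ∀ A B : Set X, C B ⊆ A → A ⊆ B → C A = C B := by
  intro A B h1 h2
  have idem : ∀ S : Set X, C (C S) = C S := by
    intro S
    have := hPI S S
    simpa using this.symm
  have hAB : A ∪ B = B := Set.union_eq_self_of_subset_left h2
  have hACB : A ∪ C B = A := Set.union_eq_self_of_subset_right h1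
  calc C A = C (A ∪ C B) := by rw [hACB]
    _ = C (C A ∪ C (C B)) := hPI A (C B)
    _ = C (C A ∪ C B) := by rw [idem]
    _ = C (A ∪ B) := (hPI A B).symm
    _ = C B := by rw [hAB]
end

section
/- There exists a choice correspondence on the four-element set X = {a, b, c, d} that satisfies Substitutability and Binary Acyclicity but violates Path Independence. Concretely, the choice function defined by C({x}) = {x} for each x, C(X) = {a,d}, C({a,b}) = {a,b}, C({a,c}) = {a}, C({a,d}) = {a,d}, C({b,c}) = {b}, C({b,d}) = {b,d}, C({c,d}) = {d}, C({a,b,c}) = {a,b}, C({a,b,d}) = {a,b,d}, C({a,c,d}) = {a,d}, C({b,c,d}) = {b,d}, and C(∅) = ∅ satisfies SUB but fails PI (since C(X) = {a,d} ≠ {a,b,d} = C(C({a,b,c}) ∪ C({d}))). -/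
/-- Substitutability. -/
def Substitutable {α : Type*} (C : Set α → Set α) : Prop :=
  ∀ A B : Set α, A ⊆ B → C B ∩ A ⊆ C A

/-- Binary Acyclicity (0-indexed). -/
def BinaryAcyclic {α : Type*} (C : Set α → Set α) : Prop :=
  ∀ (k : ℕ) (x : ℕ → α), 1 ≤ k →
    (∀ i, i + 1 < k → x i ∈ C {x i, x (i + 1)}) →
    x 0 ∈ C {x 0, x (k - 1)}

open Classical in
noncomputable def Cfun : Set (Fin 4) → Set (Fin 4) :=
  fun A => if A = Set.univ then {0, 3}
    else if A = ({2} : Set (Fin 4)) then {2} else A \ {2}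

lemma Cfun_eq (A : Set (Fin 4)) (h1 : A ≠ Set.univ) (h2 : A ≠ ({2} : Set (Fin 4))) :
    Cfun A = A \ {2} := by simp [Cfun, h1, h2]

lemma ne_univ_of (A : Set (Fin 4)) (x : Fin 4) (h : x ∉ A) : A ≠ Set.univ := by
  intro heq; exact h (heq ▸ Set.mem_univ x)

lemma ne_two_of (A : Set (Fin 4)) (x : Fin 4) (hx : x ∈ A) (h : x ≠ 2) :
    A ≠ ({2} : Set (Fin 4)) := by
  intro heq; rw [heq] at hx; simp at hx; exact h hx

lemma pair_ne_univ (y z : Fin 4) : ({y, z} : Set (Fin 4)) ≠ Set.univ := by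
  intro h
  have h0 : (0 : Fin 4) = y ∨ (0 : Fin 4) = z := by
    have := h ▸ Set.mem_univ (0 : Fin 4); simpa using this
  have h1 : (1 : Fin 4) = y ∨ (1 : Fin 4) = z := by
    have := h ▸ Set.mem_univ (1 : Fin 4); simpa using this
  have h2 : (2 : Fin 4) = y ∨ (2 : Fin 4) = z := by
    have := h ▸ Set.mem_univ (2 : Fin 4); simpa using this
  rcases h0 with h0 | h0 <;> rcases h1 with h1 | h1 <;> rcases h2 with h2 | h2 <;>
    subst_vars <;> simp_all

lemma Cfun_singleton (x : Fin 4) : Cfun {x} = {x} := by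
  by_cases h : x = 2
  · subst h
    have h1 : ({2} : Set (Fin 4)) ≠ Set.univ := ne_univ_of _ 0 (by simp)
    simp [Cfun, h1]
  · have h1 : ({x} : Set (Fin 4)) ≠ Set.univ := by
      have := pair_ne_univ x x; simpa using this
    rw [Cfun_eq _ h1 (ne_two_of _ x rfl h)]
    have h2 : (2 : Fin 4) ∉ ({x} : Set (Fin 4)) := by
      simp; intro e; exact h e.symm
    rw [Set.diff_singleton_eq_self h2]

/-- There is a choice correspondence on X = {a,b,c,d} (here a=0, b=1, c=2, d=3 in `Fin 4`)
with the indicated values, satisfying SUB and BA but violating PI. -/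
theorem exists_sub_ba_not_pi :
    ∃ C : Set (Fin 4) → Set (Fin 4),
      (∀ A, C A ⊆ A) ∧
      (∀ x : Fin 4, C {x} = {x}) ∧
      C Set.univ = {0, 3} ∧
      C {0, 1} = {0, 1} ∧ C {0, 2} = {0} ∧ C {0, 3} = {0, 3} ∧
      C {1, 2} = {1} ∧ C {1, 3} = {1, 3} ∧ C {2, 3} = {3} ∧
      C {0, 1, 2} = {0, 1} ∧ C {0, 1, 3} = {0, 1, 3} ∧
      C {0, 2, 3} = {0, 3} ∧ C {1, 2, 3} = {1, 3} ∧ C ∅ = ∅ ∧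
      Substitutable C ∧ BinaryAcyclic C ∧ ¬ PathIndependent C := by
  refine ⟨Cfun, ?_, Cfun_singleton, ?_, ?_, ?_, ?_, ?_, ?_, ?_, ?_, ?_, ?_, ?_, ?_, ?_, ?_, ?_⟩
  · -- C A ⊆ A
    intro A
    by_cases h1 : A = Set.univ
    · subst h1; simp [Cfun]
    by_cases h2 : A = ({2} : Set (Fin 4))
    · subst h2; simp [Cfun, h1]
    · rw [Cfun_eq A h1 h2]; exact Set.diff_subset
  · simp [Cfun]
  · rw [Cfun_eq _ (ne_univ_of _ 2 (by simp)) (ne_two_of _ 0 (by simp) (by decide))]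
    ext x; fin_cases x <;> simp
  · rw [Cfun_eq _ (ne_univ_of _ 1 (by simp)) (ne_two_of _ 0 (by simp) (by decide))]
    ext x; fin_cases x <;> simp
  · rw [Cfun_eq _ (ne_univ_of _ 2 (by simp)) (ne_two_of _ 0 (by simp) (by decide))]
    ext x; fin_cases x <;> simp
  · rw [Cfun_eq _ (ne_univ_of _ 0 (by simp)) (ne_two_of _ 1 (by simp) (by decide))]
    ext x; fin_cases x <;> simp
  · rw [Cfun_eq _ (ne_univ_of _ 2 (by simp)) (ne_two_of _ 1 (by simp) (by decide))]
    ext x; fin_cases x <;> simp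
  · rw [Cfun_eq _ (ne_univ_of _ 0 (by simp)) (ne_two_of _ 3 (by simp) (by decide))]
    ext x; fin_cases x <;> simp
  · rw [Cfun_eq _ (ne_univ_of _ 3 (by simp)) (ne_two_of _ 0 (by simp) (by decide))]
    ext x; fin_cases x <;> simp
  · rw [Cfun_eq _ (ne_univ_of _ 2 (by simp)) (ne_two_of _ 0 (by simp) (by decide))]
    ext x; fin_cases x <;> simp
  · rw [Cfun_eq _ (ne_univ_of _ 1 (by simp)) (ne_two_of _ 0 (by simp) (by decide))]
    ext x; fin_cases x <;> simp
  · rw [Cfun_eq _ (ne_univ_of _ 0 (by simp)) (ne_two_of _ 1 (by simp) (by decide))]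
    ext x; fin_cases x <;> simp
  · have h1 : (∅ : Set (Fin 4)) ≠ Set.univ := ne_univ_of _ 0 (by simp)
    have h2 : (∅ : Set (Fin 4)) ≠ ({2} : Set (Fin 4)) := by
      intro h
      have : (2 : Fin 4) ∈ (∅ : Set (Fin 4)) := by rw [h]; rfl
      simp at this
    rw [Cfun_eq _ h1 h2]; simp
  · -- Substitutable
    intro A B hAB x hx
    obtain ⟨hxB, hxA⟩ := hx
    by_cases hB1 : B = Set.univ
    · subst hB1
      simp [Cfun] at hxB
      by_cases hA1 : A = Set.univ
      · subst hA1; simpa [Cfun] using hxB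
      by_cases hA2 : A = ({2} : Set (Fin 4))
      · exfalso; rw [hA2] at hxA; simp at hxA; subst hxA
        rcases hxB with h | h <;> simp at h
      · rw [Cfun_eq A hA1 hA2]
        refine ⟨hxA, ?_⟩
        rcases hxB with h | h <;> simp [h]
    by_cases hB2 : B = ({2} : Set (Fin 4))
    · subst hB2
      have hB1' : ({2} : Set (Fin 4)) ≠ Set.univ := ne_univ_of _ 0 (by simp)
      simp [Cfun, hB1'] at hxB
      subst hxB
      have hA2 : A = ({2} : Set (Fin 4)) := by
        apply Set.eq_singleton_iff_unique_mem.mpr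
        exact ⟨hxA, fun y hy => by simpa using hAB hy⟩
      subst hA2
      simp [Cfun, hB1']
    · rw [Cfun_eq B hB1 hB2] at hxB
      obtain ⟨hxB', hx2⟩ := hxB
      by_cases hA1 : A = Set.univ
      · exfalso; exact hB1 (Set.eq_univ_of_univ_subset (hA1 ▸ hAB))
      by_cases hA2 : A = ({2} : Set (Fin 4))
      · exfalso; rw [hA2] at hxA; exact hx2 hxA
      · rw [Cfun_eq A hA1 hA2]; exact ⟨hxA, hx2⟩
  · -- BinaryAcyclic
    intro k x hk hchain
    by_cases h0 : x 0 = 2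
    · have hall : ∀ i, i < k → x i = 2 := by
        intro i hi
        induction i with
        | zero => exact h0
        | succ n ih =>
          have hn : x n = 2 := ih (Nat.lt_of_succ_lt hi)
          have hc := hchain n (by omega)
          by_contra hne
          have hne_univ := pair_ne_univ (x n) (x (n + 1))
          have hne_two : ({x n, x (n + 1)} : Set (Fin 4)) ≠ ({2} : Set (Fin 4)) :=
            ne_two_of _ (x (n + 1)) (by simp) hne
          rw [Cfun_eq _ hne_univ hne_two] at hc
          exact hc.2 (by simp [hn])
      have hk1 : x (k - 1) = 2 := hall (k - 1) (by omega)
      have hpair : ({x 0, x (k - 1)} : Set (Fin 4)) = {x 0} := by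
        rw [h0, hk1]; simp
      rw [hpair, Cfun_singleton]; simp
    · have hne_univ := pair_ne_univ (x 0) (x (k - 1))
      have hne_two : ({x 0, x (k - 1)} : Set (Fin 4)) ≠ ({2} : Set (Fin 4)) :=
        ne_two_of _ (x 0) (by simp) h0
      rw [Cfun_eq _ hne_univ hne_two]
      exact ⟨by simp, h0⟩
  · -- ¬ PathIndependent
    intro h
    have key := h {0, 1, 2} {3}
    have hU : ({0, 1, 2} : Set (Fin 4)) ∪ {3} = Set.univ := by
      ext x; fin_cases x <;> simp
    have hA : Cfun {0, 1, 2} = {0, 1} := by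
      rw [Cfun_eq _ (ne_univ_of _ 3 (by simp)) (ne_two_of _ 0 (by simp) (by decide))]
      ext x; fin_cases x <;> simp
    rw [hU, hA, Cfun_singleton] at key
    have hB : ({0, 1} : Set (Fin 4)) ∪ {3} = {0, 1, 3} := by
      ext x; fin_cases x <;> simp
    rw [hB] at key
    have hC : Cfun {0, 1, 3} = {0, 1, 3} := by
      rw [Cfun_eq _ (ne_univ_of _ 2 (by simp)) (ne_two_of _ 0 (by simp) (by decide))]
      ext x; fin_cases x <;> simp
    rw [hC] at key
    have h1 : (1 : Fin 4) ∈ Cfun Set.univ := key ▸ (by simp)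
    simp [Cfun] at h1
end

section
/- In a one-to-one matching market with finite sets of firms, workers, and contracts, if all firms' and workers' choice correspondences satisfy Binary Acyclicity, then an R-stable one-to-one matching exists. -/
lemma ba_refl {α : Type*} {C : Set α → Set α} (h : BinaryAcyclic C) (a : α) :
    a ∈ C {a} := by
  have := h 1 (fun _ => a) le_rfl (by intro i hi; omega)
  simpa using this

lemma ba_trans {α : Type*} {C : Set α → Set α} (h : BinaryAcyclic C) {a b c : α}
    (h1 : a ∈ C {a, b}) (h2 : b ∈ C {b, c}) : a ∈ C {a, c} := by
  have := h 3 (fun i => if i = 0 then a else if i = 1 then b else c) (by norm_num)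
    (by
      intro i hi
      have : i = 0 ∨ i = 1 := by omega
      rcases this with rfl | rfl
      · simpa using h1
      · simpa using h2)
  simpa using this

/-- Linear order extending the strict revealed preference of a binary-acyclic choice. -/
lemma exists_linear_ext {α : Type*} (C : Set α → Set α) (hBA : BinaryAcyclic C) :
    ∃ s : α → α → Prop, IsLinearOrder α s ∧
      ∀ x y : α, x ∈ C {x, y} → y ∉ C {x, y} → s y x := by
  classical
  set r : α → α → Prop := fun x y => x = y ∨ (y ∈ C {y, x} ∧ x ∉ C {y, x}) with hr
  haveI : IsPartialOrder α r :=
    { refl := fun a => Or.inl rfl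
      trans := by
        rintro a b c (rfl | ⟨hb1, hb2⟩) (rfl | ⟨hc1, hc2⟩)
        · exact Or.inl rfl
        · exact Or.inr ⟨hc1, hc2⟩
        · exact Or.inr ⟨hb1, hb2⟩
        · refine Or.inr ⟨ba_trans hBA hc1 hb1, ?_⟩
          intro ha
          rw [Set.pair_comm c a] at ha
          have : a ∈ C {a, b} := ba_trans hBA ha hc1
          rw [Set.pair_comm a b] at this
          exact hb2 this
      antisymm := by
        rintro a b (rfl | ⟨hb1, hb2⟩) h2
        · rfl
        · rcases h2 with rfl | ⟨ha1, ha2⟩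
          · rfl
          · rw [Set.pair_comm a b] at ha1
            exact absurd ha1 hb2 }
  obtain ⟨s, hs, hrs⟩ := extend_partialOrder r
  exact ⟨s, hs, fun x y hx hy => hrs _ _ (Or.inr ⟨hx, hy⟩)⟩

lemma finset_exists_max {α : Type*} (s : α → α → Prop)
    (htot : ∀ a b, s a b ∨ s b a) (htr : ∀ a b c, s a b → s b c → s a c) :
    ∀ t : Finset α, t.Nonempty → ∃ m ∈ t, ∀ y ∈ t, s y m := by
  classical
  intro t
  induction t using Finset.induction_on with
  | empty => intro h; simp at h
  | @insert a t ha ih =>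
    intro _
    by_cases h : t.Nonempty
    · obtain ⟨m, hm, hmax⟩ := ih h
      rcases htot a m with h1 | h1
      · refine ⟨m, Finset.mem_insert_of_mem hm, ?_⟩
        intro y hy
        rcases Finset.mem_insert.1 hy with rfl | hy
        · exact h1
        · exact hmax y hy
      · refine ⟨a, Finset.mem_insert_self _ _, ?_⟩
        intro y hy
        rcases Finset.mem_insert.1 hy with rfl | hy
        · rcases htot y y with h2 | h2 <;> exact h2
        · exact htr y m a (hmax y hy) h1
    · rw [Finset.not_nonempty_iff_eq_empty.1 h]
      refine ⟨a, by simp, ?_⟩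
      intro y hy
      simp only [Finset.mem_insert, Finset.notMem_empty, or_false] at hy
      subst hy
      rcases htot y y with h2 | h2 <;> exact h2

lemma set_exists_max {α : Type*} [Fintype α] (s : α → α → Prop)
    (htot : ∀ a b, s a b ∨ s b a) (htr : ∀ a b c, s a b → s b c → s a c)
    (S : Set α) (hS : S.Nonempty) : ∃ m ∈ S, ∀ y ∈ S, s y m := by
  classical
  obtain ⟨m, hm, hmax⟩ := finset_exists_max s htot htr S.toFinset (by simpa using hS)
  exact ⟨m, by simpa using hm, fun y hy => hmax y (by simpa using hy)⟩

/-- Rejected contracts: `x` is in `A` but some contract of the same agent beats it. -/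
def rejR {F X : Type*} (fn : X → F) (s : F → X → X → Prop) (A : Set X) : Set X :=
  {x | x ∈ A ∧ ∃ y ∈ A, fn y = fn x ∧ ¬ s (fn x) y x}

lemma rejR_mono {F X : Type*} (fn : X → F) (s : F → X → X → Prop) :
    Monotone (rejR fn s) := by
  rintro A A' h x ⟨hxA, y, hyA, h1, h2⟩
  exact ⟨h hxA, y, h hyA, h1, h2⟩

/-- The Adachi–Fleiner monotone operator. -/
def adachi {F W X : Type*} (fn : X → F) (wn : X → W)
    (sF : F → X → X → Prop) (sW : W → X → X → Prop) : Set X →o Set X :=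
  ⟨fun A => (rejR wn sW ((rejR fn sF A)ᶜ))ᶜ, by
    intro A A' h
    exact Set.compl_subset_compl.2 (rejR_mono wn sW
      (Set.compl_subset_compl.2 (rejR_mono fn sF h)))⟩

/-- In a one-to-one matching market with contracts, if all agents' choice correspondences
satisfy Binary Acyclicity, then an R-stable one-to-one matching exists. -/
theorem exists_r_stable_matching
    {F W X : Type*} [Fintype F] [Fintype W] [Fintype X]
    (fn : X → F) (wn : X → W)
    (Cf : F → Set X → Set X) (Cw : W → Set X → Set X)
    (hCf : ∀ f A, Cf f A ⊆ A) (hCw : ∀ w A, Cw w A ⊆ A)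
    (hBAf : ∀ f, BinaryAcyclic (Cf f)) (hBAw : ∀ w, BinaryAcyclic (Cw w)) :
    ∃ ν : Set X,
      (∀ f, {x ∈ ν | fn x = f}.Subsingleton) ∧
      (∀ w, {x ∈ ν | wn x = w}.Subsingleton) ∧
      (∀ f, Cf f {x ∈ ν | fn x = f} = {x ∈ ν | fn x = f}) ∧
      (∀ w, Cw w {x ∈ ν | wn x = w} = {x ∈ ν | wn x = w}) ∧
      ¬ ∃ x : X, x ∉ ν ∧
        Cf (fn x) ({y ∈ ν | fn y = fn x} ∪ {x}) = {x} ∧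
        Cw (wn x) ({y ∈ ν | wn y = wn x} ∪ {x}) = {x} := by
  classical
  choose sF hsFlin hsFext using fun f : F => exists_linear_ext (Cf f) (hBAf f)
  choose sW hsWlin hsWext using fun w : W => exists_linear_ext (Cw w) (hBAw w)
  have hFtot : ∀ (f : F) (a b : X), sF f a b ∨ sF f b a := fun f => (hsFlin f).toTotal.total
  have hFtrans : ∀ (f : F) (a b c : X), sF f a b → sF f b c → sF f a c :=
    fun f a b c h1 h2 => (hsFlin f).toIsPartialOrder.toIsPreorder.toIsTrans.trans a b c h1 h2
  have hFanti : ∀ (f : F) (a b : X), sF f a b → sF f b a → a = b :=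
    fun f a b h1 h2 => (hsFlin f).toIsPartialOrder.toAntisymm.antisymm a b h1 h2
  have hWtot : ∀ (w : W) (a b : X), sW w a b ∨ sW w b a := fun w => (hsWlin w).toTotal.total
  have hWtrans : ∀ (w : W) (a b c : X), sW w a b → sW w b c → sW w a c :=
    fun w a b c h1 h2 => (hsWlin w).toIsPartialOrder.toIsPreorder.toIsTrans.trans a b c h1 h2
  have hWanti : ∀ (w : W) (a b : X), sW w a b → sW w b a → a = b :=
    fun w a b h1 h2 => (hsWlin w).toIsPartialOrder.toAntisymm.antisymm a b h1 h2
  set A : Set X := OrderHom.lfp (adachi fn wn sF sW) with hAdef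
  set B : Set X := (rejR fn sF A)ᶜ with hBdef
  have hfix : (rejR wn sW B)ᶜ = A := OrderHom.map_lfp (adachi fn wn sF sW)
  have hcompl : Aᶜ ⊆ B := by
    intro x hx
    have hx' : x ∉ (rejR wn sW B)ᶜ := by rw [hfix]; exact hx
    have hx'' : x ∈ rejR wn sW B := by simpa using hx'
    exact hx''.1
  -- subsingleton facts
  have hνF : ∀ x ∈ A ∩ B, ∀ y ∈ A, fn y = fn x → sF (fn x) y x := by
    rintro x ⟨hxA, hxB⟩ y hy hfy
    by_contra h
    exact hxB ⟨hxA, y, hy, hfy, h⟩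
  have hνW : ∀ x ∈ A ∩ B, ∀ y ∈ B, wn y = wn x → sW (wn x) y x := by
    rintro x ⟨hxA, hxB⟩ y hy hwy
    rw [← hfix] at hxA
    by_contra h
    exact hxA ⟨hxB, y, hy, hwy, h⟩
  have hssF : ∀ f, {x ∈ A ∩ B | fn x = f}.Subsingleton := by
    intro f x hx y hy
    obtain ⟨hxν, hxf⟩ := hx
    obtain ⟨hyν, hyf⟩ := hy
    have h1 : sF (fn x) y x := hνF x hxν y hyν.1 (hyf.trans hxf.symm)
    have h2 : sF (fn y) x y := hνF y hyν x hxν.1 (hxf.trans hyf.symm)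
    rw [hyf.trans hxf.symm] at h2
    exact hFanti (fn x) x y h2 h1
  have hssW : ∀ w, {x ∈ A ∩ B | wn x = w}.Subsingleton := by
    intro w x hx y hy
    obtain ⟨hxν, hxw⟩ := hx
    obtain ⟨hyν, hyw⟩ := hy
    have h1 : sW (wn x) y x := hνW x hxν y hyν.2 (hyw.trans hxw.symm)
    have h2 : sW (wn y) x y := hνW y hyν x hxν.2 (hxw.trans hyw.symm)
    rw [hyw.trans hxw.symm] at h2
    exact hWanti (wn x) x y h2 h1
  refine ⟨A ∩ B, hssF, hssW, ?_, ?_, ?_⟩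
  · -- firm IR
    intro f
    rcases (hssF f).eq_empty_or_singleton with h | ⟨x, h⟩ <;> rw [h]
    · exact Set.subset_empty_iff.1 (hCf f ∅)
    · exact Set.Subset.antisymm (hCf f {x}) (Set.singleton_subset_iff.2 (ba_refl (hBAf f) x))
  · -- worker IR
    intro w
    rcases (hssW w).eq_empty_or_singleton with h | ⟨x, h⟩ <;> rw [h]
    · exact Set.subset_empty_iff.1 (hCw w ∅)
    · exact Set.Subset.antisymm (hCw w {x}) (Set.singleton_subset_iff.2 (ba_refl (hBAw w) x))
  · -- no blocking contract
    rintro ⟨x, hxν, hbf, hbw⟩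
    by_cases hxA : x ∈ A
    · -- x available to firms: firm side contradiction
      have hxB : x ∉ B := fun hxB => hxν ⟨hxA, hxB⟩
      have hxR : x ∈ rejR fn sF A := by
        rw [hBdef] at hxB; simpa using hxB
      obtain ⟨-, y, hyA, hyf, -⟩ := hxR
      obtain ⟨m, hmS, hmax⟩ := set_exists_max (sF (fn x)) (hFtot (fn x)) (hFtrans (fn x))
        {z ∈ A | fn z = fn x} ⟨y, hyA, hyf⟩
      obtain ⟨hmA, hmf⟩ := hmS
      have hmB : m ∈ B := by
        rw [hBdef]
        rintro ⟨-, z, hzA, hzf, hzs⟩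
        rw [hmf] at hzs
        exact hzs (hmax z ⟨hzA, hzf.trans hmf⟩)
      have hmν : m ∈ A ∩ B := ⟨hmA, hmB⟩
      have hxm : x ≠ m := fun h => hxν (h ▸ hmν)
      have hset : {y ∈ A ∩ B | fn y = fn x} = {m} :=
        Set.eq_singleton_iff_unique_mem.2 ⟨⟨hmν, hmf⟩, fun z hz => hssF (fn x) hz ⟨hmν, hmf⟩⟩
      rw [hset] at hbf
      have hb' : Cf (fn x) {x, m} = {x} := by
        rwa [show ({m} ∪ {x} : Set X) = {x, m} by
          rw [Set.singleton_union, Set.pair_comm]] at hbf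
      have h1 : x ∈ Cf (fn x) {x, m} := by rw [hb']; exact rfl
      have h2 : m ∉ Cf (fn x) {x, m} := by
        rw [hb']; exact fun hm => hxm (Set.mem_singleton_iff.1 hm).symm
      have hs1 : sF (fn x) m x := hsFext (fn x) x m h1 h2
      have hs2 : sF (fn x) x m := hmax x ⟨hxA, rfl⟩
      exact hxm (hFanti (fn x) x m hs2 hs1)
    · -- x available to workers: worker side contradiction
      have hxB : x ∈ B := hcompl hxA
      have hxR : x ∈ rejR wn sW B := by
        rw [← hfix] at hxA; simpa using hxA
      obtain ⟨-, y, hyB, hyw, -⟩ := hxR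
      obtain ⟨m, hmS, hmax⟩ := set_exists_max (sW (wn x)) (hWtot (wn x)) (hWtrans (wn x))
        {z ∈ B | wn z = wn x} ⟨y, hyB, hyw⟩
      obtain ⟨hmB, hmw⟩ := hmS
      have hmA : m ∈ A := by
        rw [← hfix]
        rintro ⟨-, z, hzB, hzw, hzs⟩
        rw [hmw] at hzs
        exact hzs (hmax z ⟨hzB, hzw.trans hmw⟩)
      have hmν : m ∈ A ∩ B := ⟨hmA, hmB⟩
      have hxm : x ≠ m := fun h => hxν (h ▸ hmν)
      have hset : {y ∈ A ∩ B | wn y = wn x} = {m} :=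
        Set.eq_singleton_iff_unique_mem.2 ⟨⟨hmν, hmw⟩, fun z hz => hssW (wn x) hz ⟨hmν, hmw⟩⟩
      rw [hset] at hbw
      have hb' : Cw (wn x) {x, m} = {x} := by
        rwa [show ({m} ∪ {x} : Set X) = {x, m} by
          rw [Set.singleton_union, Set.pair_comm]] at hbw
      have h1 : x ∈ Cw (wn x) {x, m} := by rw [hb']; exact rfl
      have h2 : m ∉ Cw (wn x) {x, m} := by
        rw [hb']; exact fun hm => hxm (Set.mem_singleton_iff.1 hm).symm
      have hs1 : sW (wn x) m x := hsWext (wn x) x m h1 h2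
      have hs2 : sW (wn x) x m := hmax x ⟨hxB, rfl⟩
      exact hxm (hWanti (wn x) x m hs2 hs1)
end

section
/- The choice function C on X = {a,b,c,d} with C(X) = {d}, C({a,b}) = {a}, C({a,c}) = {a,c}, C({a,d}) = {a,d}, C({b,c}) = {b,c}, C({b,d}) = {b,d}, C({c,d}) = {c,d}, C({a,b,c}) = {a,c}, C({a,b,d}) = {b,d}, C({a,c,d}) = {a,d}, C({b,c,d}) = {c,d}, C({x}) = {x}, C(∅) = ∅ violates General Acyclicity, witnessed by S₁ = {b,d}, S₂ = {c}, D₁ = {d}, S₃ = {a}, D₂ = {d}, S₄ = {b}: C({b,d} ∪ {c}) = {c,d} = S₂ ∪ D₁, C(({c} ∪ {d}) ∪ {a}) = {a,d} = S₃ ∪ D₂, and S₁ = {b,d} ⊆ C(({a} ∪ {d}) ∪ {b}) = {b,d}. -/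
/-- General Acyclicity (0-indexed; see the paper's definition). -/
def GeneralAcyclic {α : Type*} (C : Set α → Set α) : Prop :=
  ∀ (k : ℕ) (S D : ℕ → Set α), 3 ≤ k →
    (∀ i, i < k → (S i).Nonempty) →
    C (S 0 ∪ S 1) = S 1 ∪ D 0 → D 0 ⊂ S 0 →
    (∀ i, 1 ≤ i → i ≤ k - 3 → C ((S i ∪ D (i - 1)) ∪ S (i + 1)) = S (i + 1) ∪ D i) →
    (∀ i, 1 ≤ i → i ≤ k - 3 → D i ⊂ S i ∪ D (i - 1)) →
    (∀ i, 2 ≤ i → i ≤ k - 2 → (D (i - 2) ∪ S (i - 1)) ∩ S i = ∅) →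
    ¬ S 0 ⊆ C ((S (k - 2) ∪ D (k - 3)) ∪ S (k - 1))

/-- The specified choice function on X = {a,b,c,d} (a=0, b=1, c=2, d=3 in `Fin 4`)
violates General Acyclicity, witnessed by S₁={b,d}, S₂={c}, D₁={d}, S₃={a}, D₂={d},
S₄={b}. -/
theorem example_violates_ga (C : Set (Fin 4) → Set (Fin 4))
    (hC : ∀ A, C A ⊆ A)
    (h0 : ∀ x : Fin 4, C {x} = {x})
    (hX : C Set.univ = {3})
    (hab : C {0, 1} = {0})
    (hac : C {0, 2} = {0, 2})
    (had : C {0, 3} = {0, 3})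
    (hbc : C {1, 2} = {1, 2})
    (hbd : C {1, 3} = {1, 3})
    (hcd : C {2, 3} = {2, 3})
    (habc : C {0, 1, 2} = {0, 2})
    (habd : C {0, 1, 3} = {1, 3})
    (hacd : C {0, 2, 3} = {0, 3})
    (hbcd : C {1, 2, 3} = {2, 3})
    (hemp : C ∅ = ∅) :
    C (({1, 3} : Set (Fin 4)) ∪ {2}) = ({2} : Set (Fin 4)) ∪ {3} ∧
    C ((({2} : Set (Fin 4)) ∪ {3}) ∪ {0}) = ({0} : Set (Fin 4)) ∪ {3} ∧
    ({1, 3} : Set (Fin 4)) ⊆ C ((({0} : Set (Fin 4)) ∪ {3}) ∪ {1}) ∧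
    ¬ GeneralAcyclic C := by

  have e1 : (({1, 3} : Set (Fin 4)) ∪ {2}) = ({1, 2, 3} : Set (Fin 4)) := by
    ext x; simp [or_comm, or_left_comm]
  have e2 : ((({2} : Set (Fin 4)) ∪ {3}) ∪ {0}) = ({0, 2, 3} : Set (Fin 4)) := by
    ext x; simp; tauto
  have e3 : ((({0} : Set (Fin 4)) ∪ {3}) ∪ {1}) = ({0, 1, 3} : Set (Fin 4)) := by
    ext x; simp; tauto
  have e4 : (({2} : Set (Fin 4)) ∪ {3}) = ({2, 3} : Set (Fin 4)) := by
    ext x; simp; tauto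
  have e5 : (({0} : Set (Fin 4)) ∪ {3}) = ({0, 3} : Set (Fin 4)) := by
    ext x; simp; tauto
  refine ⟨by rw [e1, hbcd, e4], by rw [e2, hacd, e5], by rw [e3, habd], ?_⟩
  intro h
  have := h 4
    (fun i => if i = 0 then {1, 3} else if i = 1 then {2} else if i = 2 then {0} else {1})
    (fun _ => {3})
    (by norm_num)
    (by
      intro i _
      split_ifs
      · exact ⟨1, by simp⟩
      · exact ⟨2, rfl⟩
      · exact ⟨0, rfl⟩
      · exact ⟨1, rfl⟩)
    (by
      show C (({1, 3} : Set (Fin 4)) ∪ {2}) = ({2} : Set (Fin 4)) ∪ {3}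
      rw [e1, e4]; exact hbcd)
    (by
      constructor
      · intro x hx; simp at hx; simp [hx]
      · intro hsub
        have : (1 : Fin 4) ∈ ({3} : Set (Fin 4)) := hsub (by simp)
        simp at this)
    (by
      intro i h1 h2
      interval_cases i
      show C ((({2} : Set (Fin 4)) ∪ {3}) ∪ {0}) = ({0} : Set (Fin 4)) ∪ {3}
      rw [e2, e5]; exact hacd)
    (by
      intro i h1 h2
      interval_cases i
      constructor
      · intro x hx; simp at hx; simp [hx]
      · intro hsub
        have : (2 : Fin 4) ∈ ({3} : Set (Fin 4)) := hsub (by simp)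
        simp at this)
    (by
      intro i h1 h2
      interval_cases i
      ext x; simp)
  apply this
  show ({1, 3} : Set (Fin 4)) ⊆ C ((({0} : Set (Fin 4)) ∪ {3}) ∪ {1})
  rw [e3, habd]
end

section
/- Suppose C satisfies Substitutability, and let S be individually rational (C(S) = S). If for every non-empty set S' with S' ∩ S = ∅ neither C(S ∪ S') = S ∪ S' (no growth move) nor [S' ⊆ C(S ∪ S') and S ⊄ C(S ∪ S')] (no discard move), then S is strongly maximal individually rational: there is no non-empty S' disjoint from S with S' ⊆ C(S ∪ S'). -/
/-- If an individually rational set admits neither a growth move nor a discard move,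
then it is strongly maximal individually rational. -/
theorem no_moves_implies_strongly_maximal {X : Type*} [Fintype X] (C : Set X → Set X)
    (hC : ∀ A, C A ⊆ A)
    (hSub : ∀ A B : Set X, A ⊆ B → C B ∩ A ⊆ C A)
    (S : Set X) (hIR : C S = S)
    (hnomove : ∀ S' : Set X, S'.Nonempty → S' ∩ S = ∅ →
      ¬ (C (S ∪ S') = S ∪ S') ∧ ¬ (S' ⊆ C (S ∪ S') ∧ ¬ S ⊆ C (S ∪ S'))) :
    ¬ ∃ S' : Set X, S'.Nonempty ∧ S' ∩ S = ∅ ∧ S' ⊆ C (S ∪ S') := by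
  rintro ⟨S', hne, hdisj, hsub⟩
  obtain ⟨h1, h2⟩ := hnomove S' hne hdisj
  have hS : S ⊆ C (S ∪ S') := by
    by_contra h
    exact h2 ⟨hsub, h⟩
  exact h1 (Set.Subset.antisymm (hC _) (Set.union_subset hS hsub))
end
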